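/- Let k ≥ 4 be an integer. The system of Hammerstein equations ∫₀¹ K(t,u,k)·f(u)^k du = g(t), ∫₀¹ K(t,u,k)·g(u)^k du = f(t) (for all t ∈ [0,1]) has at least two positive continuous solutions (f,g) with f ≠ g; specifically, with f₁(t) = a·(t + 1/2) and g₁(t) = 1, both (f₁, g₁) and (g₁, f₁) are solutions. -/
import Mathlib


open Set MeasureTheory

/-- `c_k = 2(1-(1/3)^{k-1}) / ( ((k-1)/(k-2))(1-(1/3)^{k-2}) - 2(1-(1/3)^{k-1}) )`. -/
noncomputable def cCoeff (k : ℕ) : ℝ :=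
  2 * (1 - (1/3 : ℝ) ^ (k - 1)) /
    (((k : ℝ) - 1) / ((k : ℝ) - 2) * (1 - (1/3 : ℝ) ^ (k - 2)) -
      2 * (1 - (1/3 : ℝ) ^ (k - 1)))

/-- `a(k) = ( (2^{k-1}/(k-1))·(1 - (1/3)^{k-1}) )^{1/(k+1)}`. -/
noncomputable def aCoeff (k : ℕ) : ℝ :=
  ((2 : ℝ) ^ (k - 1) / ((k : ℝ) - 1) * (1 - (1/3 : ℝ) ^ (k - 1))) ^ (((k : ℝ) + 1)⁻¹)

/-- The kernel `K(t,u,k)` of Section 8. -/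
noncomputable def K8 (t u : ℝ) (k : ℕ) : ℝ :=
  (1 + cCoeff k * (t - 1/2) * (u - 1/2)) / (aCoeff k ^ k * (u + 1/2) ^ k)

lemma integral_inv_pow (n : ℕ) :
    ∫ u in (0:ℝ)..1, ((u + 1/2) ^ (n+2))⁻¹ =
      ((2:ℝ)^(n+1) - (2/3:ℝ)^(n+1)) / ((n:ℝ)+1) := by
  have h1 : ∀ u : ℝ, ((u + 1/2) ^ (n+2))⁻¹ = (fun x : ℝ => x ^ (-((n:ℤ)+2))) (u + 1/2) := by
    intro u
    show ((u + 1/2) ^ (n+2))⁻¹ = (u + 1/2) ^ (-((n:ℤ)+2))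
    rw [show (-((n:ℤ)+2)) = -((n+2 : ℕ) : ℤ) by push_cast; ring]
    rw [zpow_neg, zpow_natCast]
  rw [intervalIntegral.integral_congr (fun u _ => h1 u)]
  rw [intervalIntegral.integral_comp_add_right (fun x : ℝ => x ^ (-((n:ℤ)+2))) (1/2)]
  rw [show (0:ℝ) + 1/2 = 1/2 by norm_num, show (1:ℝ) + 1/2 = 3/2 by norm_num]
  rw [integral_zpow (by
    right
    constructor
    · omega
    · rw [Set.uIcc_of_le (by norm_num)]
      intro h
      exact absurd h.1 (by norm_num))]
  rw [show (-((n:ℤ)+2) + 1) = -((n+1:ℕ):ℤ) by push_cast; ring]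
  rw [zpow_neg, zpow_neg, zpow_natCast, zpow_natCast]
  rw [← inv_pow ((3:ℝ)/2), ← inv_pow ((1:ℝ)/2),
    show ((3:ℝ)/2)⁻¹ = 2/3 by norm_num, show ((1:ℝ)/2)⁻¹ = 2 by norm_num]
  push_cast
  rw [show (-((n:ℝ)+2)+1) = -((n:ℝ)+1) by ring, div_neg, ← neg_div, neg_sub]


noncomputable def Bj (j : ℕ) : ℝ := (2:ℝ)^(j+3)/((j:ℝ)+3) * (1 - (1/3:ℝ)^(j+3))

section facts
variable (j : ℕ)

lemma Bj_pos : 0 < Bj j := by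
  have h := pow_lt_one₀ (by norm_num : (0:ℝ) ≤ 1/3) (by norm_num) (show j+3 ≠ 0 by omega)
  unfold Bj
  have h1 : (0:ℝ) < 1 - (1/3:ℝ)^(j+3) := by linarith
  positivity

lemma aCoeff_eq : aCoeff (j+4) = (Bj j) ^ ((((j:ℝ))+5)⁻¹) := by
  unfold aCoeff Bj
  rw [show j+4-1 = j+3 by omega]
  push_cast
  ring_nf

lemma aCoeff_pos : 0 < aCoeff (j+4) := by
  rw [aCoeff_eq]
  exact Real.rpow_pos_of_pos (Bj_pos j) _

lemma aCoeff_pow : aCoeff (j+4) ^ (j+5) = Bj j := by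
  rw [aCoeff_eq]
  rw [show (((j:ℝ))+5)⁻¹ = (((j+5:ℕ):ℝ))⁻¹ by push_cast; ring]
  exact Real.rpow_inv_natCast_pow (Bj_pos j).le (by omega)

lemma cCoeff_key :
    cCoeff (j+4) * (((2:ℝ)^(j+2) - (2/3:ℝ)^(j+2))/(((j:ℕ):ℝ)+1+1)
      - ((2:ℝ)^(j+3) - (2/3:ℝ)^(j+3))/(((j:ℕ):ℝ)+2+1)) = Bj j := by
  have hj2 : (0:ℝ) < (j:ℝ)+2 := by positivity
  have hj3 : (0:ℝ) < (j:ℝ)+3 := by positivity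
  have hQpos : (0:ℝ) < (1/3:ℝ)^(j+2) := by positivity
  set Q : ℝ := (1/3:ℝ)^(j+2) with hQ
  set P : ℝ := (1/3:ℝ)^(j+3) with hP
  have hPQ : P = Q * (1/3) := by rw [hP, hQ, ← pow_succ]
  set D : ℝ := ((j:ℝ)+3)/((j:ℝ)+2) * (1-Q) - 2*(1-P) with hD
  have hDmul : D * ((j:ℝ)+2) = ((j:ℝ)+3)*(1-Q) - 2*(1 - Q*(1/3))*((j:ℝ)+2) := by
    rw [hD, hPQ]; field_simp
  have hDneg : D < 0 := by
    have h1 : D * ((j:ℝ)+2) < 0 := by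
      rw [hDmul]
      nlinarith [mul_nonneg hQpos.le (Nat.cast_nonneg j : (0:ℝ) ≤ (j:ℝ))]
    nlinarith
  have hDne : D ≠ 0 := hDneg.ne
  have hcval : cCoeff (j+4) = 2 * (1 - P) / D := by
    unfold cCoeff
    rw [show j+4-1 = j+3 by omega, show j+4-2 = j+2 by omega]
    push_cast
    rw [← hQ, ← hP, show ((j:ℝ)+4-1) = (j:ℝ)+3 by ring, show ((j:ℝ)+4-2) = (j:ℝ)+2 by ring, ← hD]
  have h23 : ∀ m : ℕ, (2/3:ℝ)^m = 2^m * (1/3)^m := by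
    intro m; rw [← mul_pow]; norm_num
  have hkey : ((2:ℝ)^(j+2) - (2/3:ℝ)^(j+2))/(((j:ℕ):ℝ)+1+1)
      - ((2:ℝ)^(j+3) - (2/3:ℝ)^(j+3))/(((j:ℕ):ℝ)+2+1) = 2^(j+2)/((j:ℝ)+3) * D := by
    rw [h23, h23, ← hQ, ← hP, hD]
    field_simp
    ring
  have hB : Bj j = 2^(j+3)/((j:ℝ)+3) * (1-P) := by rw [Bj, hP]
  rw [hkey, hcval, hB]
  clear_value Q P D
  field_simp
  ring
end facts

theorem stmt_17
    (k : ℕ) (hk : 4 ≤ k)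
    (f₁ g₁ : ℝ → ℝ)
    (hf₁ : f₁ = fun t => aCoeff k * (t + 1/2))
    (hg₁ : g₁ = fun _ => (1:ℝ)) :
    ContinuousOn f₁ (Icc 0 1) ∧ ContinuousOn g₁ (Icc 0 1) ∧
    (∀ t ∈ Icc (0:ℝ) 1, 0 < f₁ t) ∧ (∀ t ∈ Icc (0:ℝ) 1, 0 < g₁ t) ∧
    (∃ t ∈ Icc (0:ℝ) 1, f₁ t ≠ g₁ t) ∧
    (∀ t ∈ Icc (0:ℝ) 1,
      (∫ u in (0:ℝ)..1, K8 t u k * f₁ u ^ k) = g₁ t ∧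
      (∫ u in (0:ℝ)..1, K8 t u k * g₁ u ^ k) = f₁ t) ∧
    (∀ t ∈ Icc (0:ℝ) 1,
      (∫ u in (0:ℝ)..1, K8 t u k * g₁ u ^ k) = f₁ t ∧
      (∫ u in (0:ℝ)..1, K8 t u k * f₁ u ^ k) = g₁ t) := by
  obtain ⟨j, rfl⟩ : ∃ j, k = j + 4 := ⟨k - 4, by omega⟩
  have hapos := aCoeff_pos j
  have hane : aCoeff (j+4) ≠ 0 := hapos.ne'
  subst hf₁ hg₁
  have hint : ∀ n : ℕ, IntervalIntegrable (fun u:ℝ => ((u+1/2)^n)⁻¹) volume 0 1 := by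
    intro n
    apply ContinuousOn.intervalIntegrable
    apply ContinuousOn.inv₀
    · fun_prop
    · intro u hu
      rw [Set.uIcc_of_le (by norm_num : (0:ℝ) ≤ 1)] at hu
      have := hu.1
      positivity
  have hmain1 : ∀ t : ℝ,
      (∫ u in (0:ℝ)..1, K8 t u (j+4) * (aCoeff (j+4) * (u + 1/2)) ^ (j+4)) = 1 := by
    intro t
    have hEq : EqOn (fun u => K8 t u (j+4) * (aCoeff (j+4) * (u + 1/2)) ^ (j+4))
        (fun u => cCoeff (j+4) * (t-1/2) * u + (1 - cCoeff (j+4) * (t-1/2) / 2))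
        (uIcc (0:ℝ) 1) := by
      intro u hu
      rw [Set.uIcc_of_le (by norm_num : (0:ℝ) ≤ 1)] at hu
      have hu0 : (0:ℝ) < u + 1/2 := by linarith [hu.1]
      show K8 t u (j+4) * (aCoeff (j+4) * (u + 1/2)) ^ (j+4) = _
      rw [K8, mul_pow, div_mul_cancel₀ _
        (mul_ne_zero (pow_ne_zero _ hane) (pow_ne_zero _ hu0.ne'))]
      ring
    rw [intervalIntegral.integral_congr hEq]
    rw [intervalIntegral.integral_add
      (Continuous.intervalIntegrable (by fun_prop) 0 1)
      intervalIntegrable_const]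
    rw [intervalIntegral.integral_const_mul]
    simp [integral_id]
    ring
  have hmain2 : ∀ t : ℝ,
      (∫ u in (0:ℝ)..1, K8 t u (j+4)) = aCoeff (j+4) * (t + 1/2) := by
    intro t
    have hEq : EqOn (fun u => K8 t u (j+4))
        (fun u => (aCoeff (j+4) ^ (j+4))⁻¹ *
          ((1 - cCoeff (j+4) * (t-1/2)) * ((u+1/2)^(j+2+2))⁻¹ +
           (cCoeff (j+4) * (t-1/2)) * ((u+1/2)^(j+1+2))⁻¹))
        (uIcc (0:ℝ) 1) := by
      intro u hu
      rw [Set.uIcc_of_le (by norm_num : (0:ℝ) ≤ 1)] at hu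
      have hu0 : (0:ℝ) < u + 1/2 := by linarith [hu.1]
      show K8 t u (j+4) = (aCoeff (j+4) ^ (j+4))⁻¹ *
          ((1 - cCoeff (j+4) * (t-1/2)) * ((u+1/2)^(j+2+2))⁻¹ +
           (cCoeff (j+4) * (t-1/2)) * ((u+1/2)^(j+1+2))⁻¹)
      rw [K8, show j+2+2 = j+4 by omega, show j+1+2 = j+3 by omega]
      have hpow4 : (u+1/2:ℝ)^(j+4) = (u+1/2)^(j+3) * (u+1/2) := by
        rw [← pow_succ]
      have h34 : ((u+1/2:ℝ)^(j+3))⁻¹ = (u+1/2) * ((u+1/2)^(j+4))⁻¹ := by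
        rw [hpow4, mul_inv, mul_comm (((u+1/2:ℝ)^(j+3))⁻¹) ((u+1/2:ℝ)⁻¹), ← mul_assoc,
          mul_inv_cancel₀ hu0.ne', one_mul]
      rw [div_eq_mul_inv, mul_inv, h34]
      ring
    rw [intervalIntegral.integral_congr hEq, intervalIntegral.integral_const_mul,
      intervalIntegral.integral_add ((hint _).const_mul _) ((hint _).const_mul _),
      intervalIntegral.integral_const_mul, intervalIntegral.integral_const_mul,
      integral_inv_pow (j+2), integral_inv_pow (j+1)]
    rw [show j+2+1 = j+3 by omega, show j+1+1 = j+2 by omega]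
    push_cast
    have e1 : ((2:ℝ)^(j+3) - (2/3:ℝ)^(j+3))/((j:ℝ)+2+1) = Bj j := by
      rw [Bj, show (2/3:ℝ) = 2*(1/3) by norm_num, mul_pow]
      have h3 : ((j:ℝ)+3) ≠ 0 := by positivity
      have h3' : ((j:ℝ)+2+1) ≠ 0 := by positivity
      field_simp
      ring
    have step : (1 - cCoeff (j+4) * (t-1/2)) * (((2:ℝ)^(j+3) - (2/3:ℝ)^(j+3))/((j:ℝ)+2+1))
        + (cCoeff (j+4) * (t-1/2)) * (((2:ℝ)^(j+2) - (2/3:ℝ)^(j+2))/((j:ℝ)+1+1))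
        = (t+1/2) * Bj j := by
      linear_combination (t-1/2) * cCoeff_key j + e1
    rw [step, ← aCoeff_pow j, pow_succ]
    have hpne : aCoeff (j+4) ^ (j+4) ≠ 0 := pow_ne_zero _ hane
    field_simp
    ring
  refine ⟨by fun_prop, by fun_prop, ?_, ?_, ?_, ?_, ?_⟩
  · intro t ht
    have := ht.1
    have h0 : (0:ℝ) < t + 1/2 := by linarith
    positivity
  · intro t ht
    norm_num
  · by_cases h : aCoeff (j+4) * ((0:ℝ)+1/2) = 1
    · refine ⟨1, by norm_num, ?_⟩
      simp only
      intro hcon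
      rw [show ((0:ℝ)+1/2) = 1/2 by norm_num] at h
      nlinarith
    · exact ⟨0, by norm_num, h⟩
  · intro t ht
    constructor
    · simpa using hmain1 t
    · simpa using hmain2 t
  · intro t ht
    constructor
    · simpa using hmain2 t
    · simpa using hmain1 t
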